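/- Let f = a_0 + a_1 x + ... + a_n x^n ∈ ℤ[x] with a_0 = ± p_1^{k_1} ⋯ p_r^{k_r}, where r ≥ 2, the p_i are distinct primes, and the k_i are positive integers. Suppose for each i = 1, ..., r there exists a positive integer j_i ≤ n with (i) p_i ∤ a_{j_i}, (ii) k_i/j_i < v_{p_i}(a_t)/(j_i - t) for each t = 1, ..., j_i - 1 with a_t ≠ 0, and (iii) gcd(k_i, j_i) = 1. If every complex zero θ of f satisfies |θ| > 1, then f is a product of at most r irreducible factors in ℤ[x]. -/

import Mathlib

open Polynomial
open scoped Classical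

/-!
A nonconstant factor `g` of `f` has all its complex roots outside the unit disc, so
`|g(0)| = |lc g| · ∏ |θ| > 1`, and `g(0)`, a divisor of `a_0`, is divisible by some `p_i`.
On the other hand `p_i` cannot divide the constant terms of both factors of a splitting
`f = G H`. Conditions (i) and (ii) make the segment from `(0, k_i)` to `(j_i, 0)` the first edge of
the `p_i`-adic Newton polygon of `f`. Gauss's lemma for the Gauss norm of that slope splits it into
edges of `G` and `H` of heights `v(G(0))` and `v(H(0))`, and since `gcd(k_i, j_i) = 1` it contains
no lattice point besides its endpoints, so one of the two heights is `0`. Hence every nonconstant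
factor is charged to a prime `p_i`, and every prime to at most one factor.
-/

namespace Multiset

lemma card_filter_le_one_of_forall_mul_eq_prod {M : Type*} [CommMonoid M] (s : Multiset M)
    (P : M → Prop) [DecidablePred P] (hmul : ∀ a b, P a → P (a * b))
    (hprod : ∀ a b, a * b = s.prod → P a → ¬ P b) : card (s.filter P) ≤ 1 := by
  by_contra! h
  obtain ⟨a, ha⟩ := card_pos_iff_exists_mem.1 (by omega : 0 < card (s.filter P))
  obtain ⟨t, ht⟩ := exists_cons_of_mem ha
  obtain ⟨b, hb⟩ := card_pos_iff_exists_mem.1 (by rw [ht, card_cons] at h; omega : 0 < card t)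
  obtain ⟨u, rfl⟩ := exists_cons_of_mem hb
  have hPb : P b := (mem_filter.1 (by rw [ht]; simp : b ∈ s.filter P)).2
  refine hprod a (b * (u + s.filter (¬P ·)).prod) ?_ (mem_filter.1 ha).2 (hmul _ _ hPb)
  calc a * (b * (u + s.filter (¬P ·)).prod) = (s.filter P + s.filter (¬P ·)).prod := by
        rw [ht]; simp
    _ = s.prod := by rw [filter_add_not]

lemma card_le_of_forall_exists_card_filter_le_one {α ι : Type*} [Fintype ι] (T : Multiset α)
    (P : ι → α → Prop) [∀ i, DecidablePred (P i)] (hcover : ∀ a ∈ T, ∃ i, P i a)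
    (hle : ∀ i, card (T.filter (P i)) ≤ 1) : card T ≤ Fintype.card ι := by
  have hT : T ≤ ∑ i, T.filter (P i) := by
    refine le_iff_count.2 fun a => ?_
    rw [count_sum']
    by_cases ha : a ∈ T
    · obtain ⟨i, hi⟩ := hcover a ha
      calc count a T = count a (T.filter (P i)) := by rw [count_filter, if_pos hi]
        _ ≤ _ := Finset.single_le_sum (f := fun i => count a (T.filter (P i)))
            (fun _ _ => Nat.zero_le _) (Finset.mem_univ i)
    · simp [count_eq_zero_of_notMem ha]
  calc card T ≤ card (∑ i, T.filter (P i)) := card_le_card hT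
    _ = ∑ i, card (T.filter (P i)) := card_sum _ _
    _ ≤ ∑ _i : ι, 1 := Finset.sum_le_sum fun i _ => hle i
    _ = Fintype.card ι := by simp

end Multiset

lemma Nat.factorization_prod_pow_apply {ι : Type*} [Fintype ι] {p : ι → ℕ} (hp : ∀ i, (p i).Prime)
    (hinj : Function.Injective p) (k : ι → ℕ) (i : ι) :
    (∏ j, p j ^ k j).factorization (p i) = k i := by
  rw [Nat.factorization_prod fun j _ => pow_ne_zero _ (hp j).ne_zero, Finsupp.finsetSum_apply]
  simp_rw [(hp _).factorization_pow, Finsupp.single_apply, hinj.eq_iff]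
  simp

lemma Nat.exists_eq_of_prime_dvd_prod_pow {ι : Type*} [Fintype ι] {p : ι → ℕ}
    (hp : ∀ i, (p i).Prime) (k : ι → ℕ) {q : ℕ} (hq : q.Prime) (h : q ∣ ∏ i, p i ^ k i) :
    ∃ i, q = p i := by
  obtain ⟨i, -, hi⟩ := (_root_.Prime.dvd_finsetProd_iff hq.prime _).1 h
  exact ⟨i, (Nat.prime_dvd_prime_iff_eq hq (hp i)).1 (hq.dvd_of_dvd_pow hi)⟩

lemma norm_leadingCoeff_lt_norm_coeff_zero {K : Type*} [NormedField K] {P : K[X]}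
    (hsplit : P.Splits) (hdeg : 0 < P.natDegree) (hroots : ∀ θ ∈ P.roots, 1 < ‖θ‖) :
    ‖P.leadingCoeff‖ < ‖P.coeff 0‖ := by
  have hP : P ≠ 0 := ne_zero_of_natDegree_gt hdeg
  obtain ⟨θ, hθ⟩ := Multiset.card_pos_iff_exists_mem.1 (hsplit.natDegree_eq_card_roots ▸ hdeg)
  obtain ⟨rest, hrest⟩ := Multiset.exists_cons_of_mem hθ
  have hprod : 1 < (P.roots.map (‖·‖)).prod := by
    rw [hrest, Multiset.map_cons, Multiset.prod_cons]
    exact one_lt_mul_of_lt_of_le (hroots θ hθ) (Multiset.one_le_prod_map fun a ha =>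
      (hroots a (hrest ▸ Multiset.mem_cons_of_mem ha)).le)
  rw [hsplit.coeff_zero_eq_leadingCoeff_mul_prod_roots, norm_mul, norm_mul, norm_pow, norm_neg,
    norm_one, one_pow, one_mul]
  refine lt_mul_of_one_lt_right (norm_pos_iff.2 (leadingCoeff_ne_zero.2 hP)) ?_
  have hnorm : ‖P.roots.prod‖ = (P.roots.map (‖·‖)).prod :=
    map_multiset_prod (normHom : K →*₀ ℝ) P.roots
  rwa [hnorm]

lemma one_lt_abs_coeff_zero {g : ℤ[X]} (hdeg : 0 < g.natDegree)
    (hroots : ∀ θ : ℂ, aeval θ g = 0 → 1 < ‖θ‖) : 1 < |g.coeff 0| := by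
  have hinj : Function.Injective (Int.castRingHom ℂ) := (Int.castRingHom ℂ).injective_int
  have hlt := norm_leadingCoeff_lt_norm_coeff_zero (IsAlgClosed.splits (g.map (Int.castRingHom ℂ)))
    (by rwa [natDegree_map_eq_of_injective hinj]) fun θ hθ => hroots θ (by
      rw [aeval_def, ← eval_map]; exact isRoot_of_mem_roots hθ)
  rw [leadingCoeff_map_of_injective hinj, coeff_map, eq_intCast, eq_intCast, Complex.norm_intCast,
    Complex.norm_intCast] at hlt
  have hlc : (1 : ℝ) ≤ |(g.leadingCoeff : ℝ)| := by
    exact_mod_cast Int.one_le_abs (leadingCoeff_ne_zero.2 (ne_zero_of_natDegree_gt hdeg))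
  exact_mod_cast hlc.trans_lt hlt

/-- Points `(s, v_p(g_s))` of the Newton diagram of `g` on a common line of slope `-K/J` have equal
weight. -/
def newtonWeight (p J K : ℕ) (g : ℤ[X]) (s : ℕ) : ℕ := J * padicValInt p (g.coeff s) + K * s

lemma Rat.AbsoluteValue.isNonarchimedean_padic {p : ℕ} [Fact p.Prime] :
    IsNonarchimedean (Rat.AbsoluteValue.padic p) := fun x y => by
  simpa only [Rat.AbsoluteValue.padic_eq_padicNorm, Rat.cast_max] using
    (Rat.cast_le (K := ℝ)).2 (padicNorm.nonarchimedean (p := p) (q := x) (r := y))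

lemma padic_mul_pow_eq_pow_newtonWeight {p J K : ℕ} [Fact p.Prime] {q : ℝ}
    (hq : q ^ J = (p : ℝ)⁻¹) (g : ℤ[X]) {s : ℕ} (hs : g.coeff s ≠ 0) :
    Rat.AbsoluteValue.padic p (g.coeff s) * (q ^ K) ^ s = q ^ newtonWeight p J K g s := by
  rw [Rat.AbsoluteValue.padic_eq_padicNorm, padicNorm.eq_zpow_of_nonzero (Int.cast_ne_zero.2 hs),
    padicValRat.of_int, zpow_neg, zpow_natCast, Rat.cast_inv, Rat.cast_pow, Rat.cast_natCast,
    ← inv_pow, ← hq, newtonWeight, pow_add, pow_mul, pow_mul]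

/-- Gauss's lemma for the Gauss norm `max_s |g_s|_p q^(K s)` with `q^J = 1/p`, whose `s`-th term is
`q ^ newtonWeight p J K g s`. -/
theorem le_newtonWeight_add_newtonWeight {p J K : ℕ} [Fact p.Prime] (hJ : 0 < J) {G H : ℤ[X]}
    {m : ℕ} (hGH : ∀ t, (G * H).coeff t ≠ 0 → m ≤ newtonWeight p J K (G * H) t)
    {s t : ℕ} (hs : G.coeff s ≠ 0) (ht : H.coeff t ≠ 0) :
    m ≤ newtonWeight p J K G s + newtonWeight p J K H t := by
  set q : ℝ := ((p : ℝ)⁻¹) ^ ((J : ℝ)⁻¹)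
  have hp : (1 : ℝ) < p := by exact_mod_cast (Fact.out : p.Prime).one_lt
  have hq0 : 0 < q := by positivity
  have hq1 : q < 1 := Real.rpow_lt_one (by positivity) (inv_lt_one_of_one_lt₀ hp) (by positivity)
  have hqJ : q ^ J = (p : ℝ)⁻¹ := Real.rpow_inv_natCast_pow (by positivity) hJ.ne'
  set v := Rat.AbsoluteValue.padic p
  have hc : 0 < q ^ K := pow_pos hq0 K
  have hGH_norm : ((G * H).map (Int.castRingHom ℚ)).gaussNorm v (q ^ K) ≤ q ^ m := by
    unfold gaussNorm
    split_ifs with hne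
    · refine Finset.sup'_le _ _ fun i hi => ?_
      have hi' : (G * H).coeff i ≠ 0 := by
        simpa only [mem_support_iff, coeff_map, eq_intCast, Int.cast_ne_zero] using hi
      rw [coeff_map, eq_intCast, padic_mul_pow_eq_pow_newtonWeight hqJ _ hi']
      exact pow_le_pow_of_le_one hq0.le hq1.le (hGH i hi')
    · positivity
  have hG := le_gaussNorm v (G.map (Int.castRingHom ℚ)) hc.le s
  have hH := le_gaussNorm v (H.map (Int.castRingHom ℚ)) hc.le t
  rw [coeff_map, eq_intCast, padic_mul_pow_eq_pow_newtonWeight hqJ _ hs] at hG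
  rw [coeff_map, eq_intCast, padic_mul_pow_eq_pow_newtonWeight hqJ _ ht] at hH
  rw [← pow_le_pow_iff_right_of_lt_one₀ hq0 hq1, pow_add]
  calc q ^ m ≥ ((G * H).map (Int.castRingHom ℚ)).gaussNorm v (q ^ K) := hGH_norm
    _ = (G.map (Int.castRingHom ℚ)).gaussNorm v (q ^ K) *
          (H.map (Int.castRingHom ℚ)).gaussNorm v (q ^ K) := by
      rw [Polynomial.map_mul, gaussNorm_mul Rat.AbsoluteValue.isNonarchimedean_padic hc]
    _ ≥ _ := mul_le_mul hG hH (by positivity) (gaussNorm_nonneg v _ hc.le)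

lemma mul_le_newtonWeight {p J K : ℕ} {f : ℤ[X]} (hf0 : padicValInt p (f.coeff 0) = K)
    (hmid : ∀ t, 1 ≤ t → t < J → f.coeff t ≠ 0 → K * (J - t) < padicValInt p (f.coeff t) * J)
    {t : ℕ} (ht : f.coeff t ≠ 0) : K * J ≤ newtonWeight p J K f t := by
  unfold newtonWeight
  rcases Nat.eq_zero_or_pos t with rfl | ht1
  · rw [hf0, mul_zero, add_zero, mul_comm]
  rcases lt_or_ge t J with htJ | htJ
  · have := hmid t ht1 htJ ht
    have hsplit : K * (J - t) + K * t = K * J := by rw [← mul_add, Nat.sub_add_cancel htJ.le]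
    nlinarith
  · nlinarith

/-- The segment from `(0, K)` to `(J, 0)` contains no lattice point other than its endpoints, so
it is not the sum of two segments with nonzero heights `a`, `b`. -/
lemma eq_zero_or_eq_zero_of_coprime {a b s t J K : ℕ} (hKJ : K.Coprime J) (hab : a + b = K)
    (hst : s + t = J) (hs : J * a ≤ K * s) (ht : J * b ≤ K * t) : a = 0 ∨ b = 0 := by
  have hJa : J * a = K * s := by nlinarith
  have hJs : J ∣ s := hKJ.symm.dvd_of_dvd_mul_left ⟨a, hJa.symm⟩
  rcases Nat.eq_zero_or_pos J with rfl | hJ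
  · rw [Nat.coprime_zero_right] at hKJ; omega
  rcases Nat.eq_zero_or_pos s with rfl | hs0
  · rw [mul_zero] at hJa
    exact .inl ((mul_eq_zero.1 hJa).resolve_left hJ.ne')
  · obtain rfl : s = J := le_antisymm (by omega) (Nat.le_of_dvd hs0 hJs)
    obtain rfl : t = 0 := by omega
    rw [mul_zero, Nat.le_zero] at ht
    exact .inr ((mul_eq_zero.1 ht).resolve_left hJ.ne')

theorem not_dvd_coeff_zero_of_dvd_coeff_zero {p J K : ℕ} [Fact p.Prime] (hJ : 0 < J)
    (hKJ : K.Coprime J) {G H : ℤ[X]} (hf0 : (G * H).coeff 0 ≠ 0)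
    (hval : padicValInt p ((G * H).coeff 0) = K) (hJc : ¬ (p : ℤ) ∣ (G * H).coeff J)
    (hmid : ∀ t, 1 ≤ t → t < J → (G * H).coeff t ≠ 0 →
      K * (J - t) < padicValInt p ((G * H).coeff t) * J)
    (hG : (p : ℤ) ∣ G.coeff 0) : ¬ (p : ℤ) ∣ H.coeff 0 := by
  intro hH
  rw [mul_coeff_zero] at hf0 hval
  have hG0 : G.coeff 0 ≠ 0 := left_ne_zero_of_mul hf0
  have hH0 : H.coeff 0 ≠ 0 := right_ne_zero_of_mul hf0
  have ha : 1 ≤ padicValInt p (G.coeff 0) :=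
    ((padicValInt_dvd_iff 1 _).1 (by simpa using hG)).resolve_left hG0
  have hb : 1 ≤ padicValInt p (H.coeff 0) :=
    ((padicValInt_dvd_iff 1 _).1 (by simpa using hH)).resolve_left hH0
  rw [padicValInt.mul hG0 hH0] at hval
  have hweight : ∀ t, (G * H).coeff t ≠ 0 → K * J ≤ newtonWeight p J K (G * H) t :=
    fun t => mul_le_newtonWeight (by rw [mul_coeff_zero, padicValInt.mul hG0 hH0, hval]) hmid
  have hGw : ∀ s, G.coeff s ≠ 0 → J * padicValInt p (G.coeff 0) ≤ newtonWeight p J K G s := by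
    intro s hs
    have := le_newtonWeight_add_newtonWeight hJ hweight hs hH0
    simp only [newtonWeight] at this ⊢
    nlinarith
  have hHw : ∀ t, H.coeff t ≠ 0 → J * padicValInt p (H.coeff 0) ≤ newtonWeight p J K H t := by
    intro t ht
    have := le_newtonWeight_add_newtonWeight hJ hweight hG0 ht
    simp only [newtonWeight] at this ⊢
    nlinarith
  rw [coeff_mul] at hJc
  refine hJc (Finset.dvd_sum fun ⟨s, t⟩ hst => ?_)
  rw [Finset.HasAntidiagonal.mem_antidiagonal] at hst
  by_contra hdvd
  have hs : ¬ (p : ℤ) ∣ G.coeff s := fun h => hdvd (dvd_mul_of_dvd_left h _)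
  have ht : ¬ (p : ℤ) ∣ H.coeff t := fun h => hdvd (dvd_mul_of_dvd_right h _)
  have hGs := hGw s fun h => hs (h ▸ dvd_zero _)
  have hHt := hHw t fun h => ht (h ▸ dvd_zero _)
  simp only [newtonWeight, padicValInt.eq_zero_of_not_dvd hs, padicValInt.eq_zero_of_not_dvd ht,
    mul_zero, zero_add] at hGs hHt
  rcases eq_zero_or_eq_zero_of_coprime hKJ hval hst hGs hHt with h | h <;> omega

lemma exists_dvd_coeff_zero_of_dvd {ι : Type*} [Fintype ι] {p : ι → ℕ} (hp : ∀ i, (p i).Prime)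
    {k : ι → ℕ} {f g : ℤ[X]} (hf0 : (f.coeff 0).natAbs = ∏ i, p i ^ k i) (hgf : g ∣ f)
    (hdeg : 0 < g.natDegree) (hroots : ∀ θ : ℂ, aeval θ f = 0 → 1 < ‖θ‖) :
    ∃ i, (p i : ℤ) ∣ g.coeff 0 := by
  have hg0 : (g.coeff 0).natAbs ≠ 1 := by
    have := one_lt_abs_coeff_zero hdeg fun θ hθ =>
      hroots θ (aeval_eq_zero_of_dvd_aeval_eq_zero hgf hθ)
    rw [Int.abs_eq_natAbs] at this
    omega
  obtain ⟨q, hq, hqg⟩ := Nat.exists_prime_and_dvd hg0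
  have hqf : q ∣ ∏ i, p i ^ k i :=
    hf0 ▸ hqg.trans (Int.natAbs_dvd_natAbs.2 (by simpa using map_dvd constantCoeff hgf))
  obtain ⟨i, rfl⟩ := Nat.exists_eq_of_prime_dvd_prod_pow hp k hq hqf
  exact ⟨i, Int.natCast_dvd.2 hqg⟩

lemma card_filter_dvd_coeff_zero_le_one {p J K : ℕ} (hp : p.Prime) (hJ : 0 < J)
    (hKJ : K.Coprime J) {s : Multiset ℤ[X]} {f : ℤ[X]} (hf : s.prod = f) (hf0 : f.coeff 0 ≠ 0)
    (hval : padicValInt p (f.coeff 0) = K) (hJc : ¬ (p : ℤ) ∣ f.coeff J)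
    (hmid : ∀ t, 1 ≤ t → t < J → f.coeff t ≠ 0 → K * (J - t) < padicValInt p (f.coeff t) * J) :
    Multiset.card (s.filter fun g => (p : ℤ) ∣ g.coeff 0) ≤ 1 := by
  have := Fact.mk hp
  refine Multiset.card_filter_le_one_of_forall_mul_eq_prod s _ (fun a b ha => ?_) fun G H hGH => ?_
  · rw [mul_coeff_zero]
    exact dvd_mul_of_dvd_left ha _
  · rw [hf] at hGH
    subst hGH
    exact not_dvd_coeff_zero_of_dvd_coeff_zero hJ hKJ hf0 hval hJc hmid

theorem at_most_r_irreducible_factors_general (r : ℕ)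
    (p : Fin r → ℕ) (hp : ∀ i, (p i).Prime) (hdist : Function.Injective p)
    (k : Fin r → ℕ)
    (f : Polynomial ℤ)
    (ha0 : f.coeff 0 = (∏ i, ((p i : ℤ)) ^ (k i)) ∨
           f.coeff 0 = -(∏ i, ((p i : ℤ)) ^ (k i)))
    (j : Fin r → ℕ) (hj1 : ∀ i, 1 ≤ j i)
    (h1 : ∀ i, ¬ ((p i : ℤ)) ∣ f.coeff (j i))
    (h2 : ∀ i, ∀ t, 1 ≤ t → t < j i → f.coeff t ≠ 0 →
      k i * (j i - t) < padicValInt (p i) (f.coeff t) * (j i))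
    (h3 : ∀ i, Nat.gcd (k i) (j i) = 1)
    (hroots : ∀ θ : ℂ, Polynomial.aeval θ f = 0 → 1 < ‖θ‖) :
    ∀ s : Multiset (Polynomial ℤ), (∀ g ∈ s, Irreducible g) → f = s.prod →
      Multiset.card (s.filter fun g => 0 < g.natDegree) ≤ r := by
  intro s _ hprod
  have hN : (f.coeff 0).natAbs = ∏ i, p i ^ k i := by
    have hcast : ∏ i, ((p i : ℤ)) ^ (k i) = ((∏ i, p i ^ k i : ℕ) : ℤ) := by push_cast; rfl
    rcases ha0 with h | h <;> rw [h, hcast] <;> simp only [Int.natAbs_neg, Int.natAbs_natCast]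
  have hf0 : f.coeff 0 ≠ 0 := by
    rw [← Int.natAbs_ne_zero, hN]
    exact Finset.prod_ne_zero_iff.2 fun i _ => pow_ne_zero _ (hp i).ne_zero
  have hval (i : Fin r) : padicValInt (p i) (f.coeff 0) = k i := by
    rw [padicValInt, hN, ← Nat.factorization_def _ (hp i),
      Nat.factorization_prod_pow_apply hp hdist]
  refine (Multiset.card_le_of_forall_exists_card_filter_le_one _
    (fun i g => (p i : ℤ) ∣ g.coeff 0) (fun g hg => ?_) fun i => ?_).trans_eq (Fintype.card_fin r)
  · rw [Multiset.mem_filter] at hg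
    exact exists_dvd_coeff_zero_of_dvd hp hN (hprod ▸ Multiset.dvd_prod hg.1) hg.2 hroots
  · exact (Multiset.card_le_card (Multiset.filter_le_filter _ (Multiset.filter_le _ s))).trans
      (card_filter_dvd_coeff_zero_le_one (hp i) (hj1 i) (h3 i) hprod.symm hf0 (hval i) (h1 i)
        (h2 i))

/-- Theorem 5 of the paper: f is a product of at most r irreducible factors in ℤ[x]. -/
theorem at_most_r_irreducible_factors (r : ℕ) (hr : 2 ≤ r)
    (p : Fin r → ℕ) (hp : ∀ i, (p i).Prime) (hdist : Function.Injective p)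
    (k : Fin r → ℕ) (hk : ∀ i, 1 ≤ k i)
    (f : Polynomial ℤ) (n : ℕ) (hn : f.natDegree = n)
    (ha0 : f.coeff 0 = (∏ i, ((p i : ℤ)) ^ (k i)) ∨
           f.coeff 0 = -(∏ i, ((p i : ℤ)) ^ (k i)))
    (j : Fin r → ℕ) (hj1 : ∀ i, 1 ≤ j i) (hjn : ∀ i, j i ≤ n)
    (h1 : ∀ i, ¬ ((p i : ℤ)) ∣ f.coeff (j i))
    (h2 : ∀ i, ∀ t, 1 ≤ t → t < j i → f.coeff t ≠ 0 →
      k i * (j i - t) < padicValInt (p i) (f.coeff t) * (j i))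
    (h3 : ∀ i, Nat.gcd (k i) (j i) = 1)
    (hroots : ∀ θ : ℂ, Polynomial.aeval θ f = 0 → 1 < ‖θ‖) :
    ∀ s : Multiset (Polynomial ℤ), (∀ g ∈ s, Irreducible g) → f = s.prod →
      Multiset.card (s.filter fun g => 0 < g.natDegree) ≤ r :=
  at_most_r_irreducible_factors_general r p hp hdist k f ha0 j hj1 h1 h2 h3 hroots
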